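/- Let Δ ≥ 1 and let a, x be integers with 0 ≤ x and 2x + 1 ≤ a ≤ Δ. Let G be a finite Δ-regular simple graph that admits a proper Δ-edge coloring (an assignment of colors from {1,…,Δ} to the edges such that edges sharing an endpoint receive distinct colors). If G admits a valid Π⁺_Δ(a,x)-labeling, then G admits a valid Π_Δ(⌊(a − 2x − 1)/2⌋, x + 1)-labeling. -/

import Mathlib

/-!
Keep `M`, `P`, `O`, `X` and turn every `A` and `C` into `X`, except that at an `A`-vertex and
at a `C`-vertex exactly `p = ⌊(a - 2x - 1)/2⌋` selected half-edges become `A`. The edge colouring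
decides which half-edges may be selected: with threshold `t = p + x`, an `A` half-edge only if its
colour is `≥ t`, a `C` half-edge only if its colour is `< t`. Both ends of an edge see the same
colour, so no `{A, C}` edge is selected on both sides, while `{A, A}` and `{C, C}` edges do not
occur at all. The colours at a vertex are distinct, so at most `t` of its half-edges have colour
`< t` and at most `Δ - t` have colour `≥ t`; this leaves at least `(a - x - 1) - t ≥ p`
candidates at an `A`-vertex and `(Δ - x) - (Δ - t) ≥ p` at a `C`-vertex.
-/

inductive Lab : Type
  | M | P | O | A | X
  deriving DecidableEq

instance : Fintype Lab :=
  ⟨{Lab.M, Lab.P, Lab.O, Lab.A, Lab.X}, by intro x; cases x <;> simp⟩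

/-- Node constraint `N_Δ(a,x)`: the three allowed multisets of size `Δ`. -/
def nodeC (Δ a x : ℕ) (m : Multiset Lab) : Prop :=
  m = Multiset.replicate (Δ - x) Lab.M + Multiset.replicate x Lab.X ∨
  m = Multiset.replicate a Lab.A + Multiset.replicate (Δ - a) Lab.X ∨
  m = Lab.P ::ₘ Multiset.replicate (Δ - 1) Lab.O

/-- Edge constraint `E`: all unordered pairs except `{M,M}, {A,A}, {P,P}, {P,A}, {P,O}`. -/
def edgeC (l₁ l₂ : Lab) : Prop :=
  ¬ ((l₁ = Lab.M ∧ l₂ = Lab.M) ∨ (l₁ = Lab.A ∧ l₂ = Lab.A) ∨ (l₁ = Lab.P ∧ l₂ = Lab.P) ∨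
     (l₁ = Lab.P ∧ l₂ = Lab.A) ∨ (l₁ = Lab.A ∧ l₂ = Lab.P) ∨
     (l₁ = Lab.P ∧ l₂ = Lab.O) ∨ (l₁ = Lab.O ∧ l₂ = Lab.P))

instance (l₁ l₂ : Lab) : Decidable (edgeC l₁ l₂) := by
  unfold edgeC; infer_instance

/-- A valid `Π_Δ(a,x)`-labeling: `ℓ u v` is the label that `u` assigns to the edge `{u,v}`. -/
def validLabeling {V : Type*} [Fintype V] (G : SimpleGraph V) [DecidableRel G.Adj]
    (Δ a x : ℕ) (ℓ : V → V → Lab) : Prop :=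
  (∀ v : V, nodeC Δ a x ((G.neighborFinset v).val.map (ℓ v))) ∧
  (∀ u v : V, G.Adj u v → edgeC (ℓ u v) (ℓ v u))

/-- The alphabet `Σ⁺` of `Π⁺_Δ(a,x)`. -/
inductive Lab6 : Type
  | M | P | O | A | X | C
  deriving DecidableEq

instance : Fintype Lab6 :=
  ⟨{Lab6.M, Lab6.P, Lab6.O, Lab6.A, Lab6.X, Lab6.C}, by intro x; cases x <;> simp⟩

/-- Node constraint `N⁺_Δ(a,x)`: the four allowed multisets of size `Δ`. -/
def nodeCPlus (Δ a x : ℕ) (m : Multiset Lab6) : Prop :=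
  m = Multiset.replicate (Δ - x - 1) Lab6.M + Multiset.replicate (x + 1) Lab6.X ∨
  m = Lab6.P ::ₘ Multiset.replicate (Δ - 1) Lab6.O ∨
  m = Multiset.replicate (a - x - 1) Lab6.A + Multiset.replicate (Δ - a + x + 1) Lab6.X ∨
  m = Multiset.replicate (Δ - x) Lab6.C + Multiset.replicate x Lab6.X

/-- Edge constraint `E⁺`: all unordered pairs over `Σ⁺` except
`{M,M}, {A,A}, {P,P}, {P,A}, {P,O}, {P,C}, {C,C}`. -/
def edgeCPlus (l₁ l₂ : Lab6) : Prop :=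
  ¬ ((l₁ = Lab6.M ∧ l₂ = Lab6.M) ∨ (l₁ = Lab6.A ∧ l₂ = Lab6.A) ∨ (l₁ = Lab6.P ∧ l₂ = Lab6.P) ∨
     (l₁ = Lab6.P ∧ l₂ = Lab6.A) ∨ (l₁ = Lab6.A ∧ l₂ = Lab6.P) ∨
     (l₁ = Lab6.P ∧ l₂ = Lab6.O) ∨ (l₁ = Lab6.O ∧ l₂ = Lab6.P) ∨
     (l₁ = Lab6.P ∧ l₂ = Lab6.C) ∨ (l₁ = Lab6.C ∧ l₂ = Lab6.P) ∨
     (l₁ = Lab6.C ∧ l₂ = Lab6.C))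

/-- A valid `Π⁺_Δ(a,x)`-labeling. -/
def validLabelingPlus {V : Type*} [Fintype V] (G : SimpleGraph V) [DecidableRel G.Adj]
    (Δ a x : ℕ) (ℓ : V → V → Lab6) : Prop :=
  (∀ v : V, nodeCPlus Δ a x ((G.neighborFinset v).val.map (ℓ v))) ∧
  (∀ u v : V, G.Adj u v → edgeCPlus (ℓ u v) (ℓ v u))

open Finset

namespace Lab6

def forget : Lab6 → Lab
  | M => Lab.M
  | P => Lab.P
  | O => Lab.O
  | A | X | C => Lab.X

theorem edgeC_forget {l₁ l₂ : Lab6} (h : edgeCPlus l₁ l₂) : edgeC l₁.forget l₂.forget := by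
  cases l₁ <;> cases l₂ <;> simp_all [edgeCPlus, edgeC, forget]

def Selectable (t : ℕ) (l : Lab6) (col : ℕ) : Prop :=
  (l = A ∧ t ≤ col) ∨ (l = C ∧ col < t)

instance (t : ℕ) (l : Lab6) (col : ℕ) : Decidable (Selectable t l col) := by
  unfold Selectable; infer_instance

theorem edgeC_ite_forget {t col : ℕ} {l₁ l₂ : Lab6} {b₁ b₂ : Prop} [Decidable b₁] [Decidable b₂]
    (h : edgeCPlus l₁ l₂) (h₁ : b₁ → Selectable t l₁ col) (h₂ : b₂ → Selectable t l₂ col) :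
    edgeC (if b₁ then Lab.A else l₁.forget) (if b₂ then Lab.A else l₂.forget) := by
  by_cases hb₁ : b₁ <;> by_cases hb₂ : b₂ <;> simp only [hb₁, hb₂, if_true, if_false]
  · have := h₁ hb₁; have := h₂ hb₂
    cases l₁ <;> cases l₂ <;> simp_all [Selectable, edgeCPlus] <;> omega
  · have := h₁ hb₁
    cases l₁ <;> cases l₂ <;> simp_all [Selectable, edgeCPlus, edgeC, forget]
  · have := h₂ hb₂
    cases l₁ <;> cases l₂ <;> simp_all [Selectable, edgeCPlus, edgeC, forget]
  · exact edgeC_forget h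

end Lab6

open Lab6

section Counting

variable {α : Type*} {s : Finset α}

theorem card_filter_val_lt_le {n : ℕ} {f : α → Fin n} (hf : Set.InjOn f s) (k : ℕ) :
    #{u ∈ s | (f u : ℕ) < k} ≤ k := by
  simpa using card_le_card_of_injOn (fun u => (f u : ℕ)) (t := range k)
    (fun u hu => by simp_all)
    (fun u hu w hw h => hf (mem_filter.1 hu).1 (mem_filter.1 hw).1 (Fin.ext h))

theorem card_filter_le_val_le {n : ℕ} {f : α → Fin n} (hf : Set.InjOn f s) (k : ℕ) :
    #{u ∈ s | k ≤ (f u : ℕ)} ≤ n - k := by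
  simpa using card_le_card_of_injOn (fun u => (f u : ℕ)) (t := Ico k n)
    (fun u hu => by simp_all)
    (fun u hu w hw h => hf (mem_filter.1 hu).1 (mem_filter.1 hw).1 (Fin.ext h))

theorem map_ite_mem_val [DecidableEq α] {β : Type*} {K : Finset α} (hK : K ⊆ s) (b c : β) :
    s.val.map (fun u => if u ∈ K then b else c) =
      Multiset.replicate #K b + Multiset.replicate (#s - #K) c := by
  have hKs : {u ∈ s | u ∈ K} = K := by rw [filter_mem_eq_inter, inter_eq_right.2 hK]
  have hsplit := hKs ▸ card_filter_add_card_filter_not (s := s) (· ∈ K)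
  rw [← Multiset.filter_add_not (· ∈ K) s.val, Multiset.map_add,
    Multiset.map_congr rfl fun u hu => if_pos (Multiset.mem_filter.1 hu).2,
    Multiset.map_congr (g := fun _ => c) rfl fun u hu => if_neg (Multiset.mem_filter.1 hu).2,
    Multiset.map_const', Multiset.map_const', ← filter_val, ← filter_val, hKs]
  congr 2
  simp only [card_val]
  omega

theorem count_A_sub_le_card_selectable {n t : ℕ} {ℓ : α → Lab6} {col : α → Fin n}
    (hcol : Set.InjOn col s) :
    (s.val.map ℓ).count A - t ≤ #{u ∈ s | Selectable t (ℓ u) (col u)} := by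
  rw [Multiset.count_map, ← filter_val, card_val]
  have hsplit :=
    card_filter_add_card_filter_not (s := {u ∈ s | A = ℓ u}) (fun u => (col u : ℕ) < t)
  have hlow := card_filter_val_lt_le (hcol.mono (filter_subset (A = ℓ ·) s)) t
  have hhigh : #{u ∈ {u ∈ s | A = ℓ u} | ¬ (col u : ℕ) < t} ≤
      #{u ∈ s | Selectable t (ℓ u) (col u)} :=
    card_le_card fun u hu => by
      simp only [mem_filter] at hu ⊢
      exact ⟨hu.1.1, .inl ⟨hu.1.2.symm, not_lt.1 hu.2⟩⟩
  omega

theorem count_C_sub_le_card_selectable {n t : ℕ} {ℓ : α → Lab6} {col : α → Fin n}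
    (hcol : Set.InjOn col s) :
    (s.val.map ℓ).count C - (n - t) ≤ #{u ∈ s | Selectable t (ℓ u) (col u)} := by
  rw [Multiset.count_map, ← filter_val, card_val]
  have hsplit :=
    card_filter_add_card_filter_not (s := {u ∈ s | C = ℓ u}) (fun u => t ≤ (col u : ℕ))
  have hhigh := card_filter_le_val_le (hcol.mono (filter_subset (C = ℓ ·) s)) t
  have hlow : #{u ∈ {u ∈ s | C = ℓ u} | ¬ t ≤ (col u : ℕ)} ≤
      #{u ∈ s | Selectable t (ℓ u) (col u)} :=
    card_le_card fun u hu => by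
      simp only [mem_filter] at hu ⊢
      exact ⟨hu.1.1, .inr ⟨hu.1.2.symm, not_le.1 hu.2⟩⟩
  omega

end Counting

section Relabel

variable {α : Type*} [DecidableEq α] {s K : Finset α} {ℓ : α → Lab6}

def relabel (K : Finset α) (ℓ : α → Lab6) (u : α) : Lab :=
  if u ∈ K then Lab.A else (ℓ u).forget

theorem map_relabel_of_forget_eq_X (hK : K ⊆ s) (hX : ∀ l ∈ s.val.map ℓ, l.forget = Lab.X) :
    s.val.map (relabel K ℓ) = Multiset.replicate #K Lab.A + Multiset.replicate (#s - #K) Lab.X := by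
  rw [← map_ite_mem_val hK]
  exact Multiset.map_congr rfl fun u hu => by
    simp only [relabel, hX _ (Multiset.mem_map_of_mem ℓ hu)]

theorem map_relabel_of_ne_A_of_ne_C {n t : ℕ} {col : α → Fin n}
    (hK : K ⊆ {u ∈ s | Selectable t (ℓ u) (col u)}) (hA : A ∉ s.val.map ℓ)
    (hC : C ∉ s.val.map ℓ) :
    s.val.map (relabel K ℓ) = (s.val.map ℓ).map forget := by
  have hK : K = ∅ := eq_empty_of_forall_notMem fun u hu => by
    obtain ⟨hus, hsel⟩ := mem_filter.1 (hK hu)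
    rcases hsel with ⟨h, -⟩ | ⟨h, -⟩
    · exact hA (h ▸ Multiset.mem_map_of_mem ℓ hus)
    · exact hC (h ▸ Multiset.mem_map_of_mem ℓ hus)
  rw [Multiset.map_map]
  exact Multiset.map_congr rfl fun u _ => by simp [relabel, hK]

theorem nodeC_map_relabel {Δ a x p : ℕ} (hp : 2 * p ≤ a - 2 * x - 1) (haΔ : a ≤ Δ)
    {col : α → Fin Δ} (hs : #s = Δ) (hcol : Set.InjOn col s)
    (hℓ : nodeCPlus Δ a x (s.val.map ℓ))
    (hKs : K ⊆ {u ∈ s | Selectable (p + x) (ℓ u) (col u)})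
    (hK : #K = min p #{u ∈ s | Selectable (p + x) (ℓ u) (col u)}) :
    nodeC Δ p (x + 1) (s.val.map (relabel K ℓ)) := by
  have hKp : p ≤ #{u ∈ s | Selectable (p + x) (ℓ u) (col u)} → #K = p :=
    fun h => hK.trans (min_eq_left h)
  rcases hℓ with hm | hm | hm | hm
  · refine .inl ?_
    rw [map_relabel_of_ne_A_of_ne_C hKs (by simp [hm, Multiset.mem_replicate])
      (by simp [hm, Multiset.mem_replicate]), hm]
    simp [forget, Nat.sub_sub]
  · refine .inr (.inr ?_)
    rw [map_relabel_of_ne_A_of_ne_C hKs (by simp [hm, Multiset.mem_replicate])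
      (by simp [hm, Multiset.mem_replicate]), hm]
    simp [forget]
  · refine .inr (.inl ?_)
    rw [map_relabel_of_forget_eq_X (hKs.trans (filter_subset _ s))
      (by simp [hm, Multiset.mem_replicate, or_imp, forall_and, forget]), hs, hKp]
    have := count_A_sub_le_card_selectable (t := p + x) (ℓ := ℓ) hcol
    simp [hm, Multiset.count_replicate] at this
    omega
  · refine .inr (.inl ?_)
    rw [map_relabel_of_forget_eq_X (hKs.trans (filter_subset _ s))
      (by simp [hm, Multiset.mem_replicate, or_imp, forall_and, forget]), hs, hKp]
    have := count_C_sub_le_card_selectable (t := p + x) (ℓ := ℓ) hcol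
    simp [hm, Multiset.count_replicate] at this
    omega

end Relabel

theorem stmt_4_general {V : Type*} [Fintype V] (G : SimpleGraph V) [DecidableRel G.Adj]
    (Δ a x : ℕ) (haΔ : a ≤ Δ)
    (hreg : G.IsRegularOfDegree Δ)
    (c : V → V → Fin Δ)
    (hcsym : ∀ u v, G.Adj u v → c u v = c v u)
    (hcproper : ∀ u v w, G.Adj u v → G.Adj u w → v ≠ w → c u v ≠ c u w)
    (ℓp : V → V → Lab6) (hvalid : validLabelingPlus G Δ a x ℓp) :
    ∃ ℓ : V → V → Lab, validLabeling G Δ ((a - 2 * x - 1) / 2) (x + 1) ℓ := by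
  classical
  obtain ⟨hnode, hedge⟩ := hvalid
  set p := (a - 2 * x - 1) / 2
  let S : V → Finset V := fun v =>
    {u ∈ G.neighborFinset v | Selectable (p + x) (ℓp v u) (c v u)}
  choose K hKS hK using fun v => exists_subset_card_eq (min_le_right p #(S v))
  have hcol : ∀ v, Set.InjOn (c v) (G.neighborFinset v) := fun v u hu w hw huw =>
    by_contra fun hne => hcproper v u w (by simpa using hu) (by simpa using hw) hne huw
  refine ⟨fun v => relabel (K v) (ℓp v), fun v => ?_, fun u v huv => ?_⟩
  · exact nodeC_map_relabel (Nat.mul_div_le _ 2) haΔ (hreg v) (hcol v) (hnode v) (hKS v) (hK v)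
  · exact edgeC_ite_forget (hedge u v huv) (fun h => (mem_filter.1 (hKS u h)).2)
      fun h => hcsym u v huv ▸ (mem_filter.1 (hKS v h)).2

/-- In a finite `Δ`-regular simple graph admitting a proper `Δ`-edge
coloring, any valid `Π⁺_Δ(a,x)`-labeling can be turned into a valid
`Π_Δ(⌊(a − 2x − 1)/2⌋, x + 1)`-labeling. -/
theorem stmt_4 {V : Type*} [Fintype V] (G : SimpleGraph V) [DecidableRel G.Adj]
    (Δ a x : ℕ) (hΔ : 1 ≤ Δ) (hax : 2 * x + 1 ≤ a) (haΔ : a ≤ Δ) (hxΔ : x ≤ Δ)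
    (hreg : G.IsRegularOfDegree Δ)
    (c : V → V → Fin Δ)
    (hcsym : ∀ u v, G.Adj u v → c u v = c v u)
    (hcproper : ∀ u v w, G.Adj u v → G.Adj u w → v ≠ w → c u v ≠ c u w)
    (ℓp : V → V → Lab6) (hvalid : validLabelingPlus G Δ a x ℓp) :
    ∃ ℓ : V → V → Lab, validLabeling G Δ ((a - 2 * x - 1) / 2) (x + 1) ℓ :=
  stmt_4_general G Δ a x haΔ hreg c hcsym hcproper ℓp hvalid
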